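/- arXiv:1605.01905 — 8 statements merged into one kernel-verified Lean document; each statement's English description precedes it below -/
import Mathlib

section
/- Let d ≥ 1 and let U₁, U₂, U₃ be convex open subsets of ℝ^d, not all empty, and let X = U₁ ∪ U₂ ∪ U₃. Then the code C(U;X) of this cover cannot simultaneously contain the codewords {1,2} and {1,3} while omitting the codewords {1} and {1,2,3}. In other words, no code C ⊆ 2^{[3]} containing {1,2} and {1,3} but not containing {1} and {1,2,3} is the code of a cover by convex open sets. -/
/-- The code of a cover: for open sets `U 0, ..., U (n-1)` in an ambient space,
relative to a set `X`, a codeword `σ` belongs to the code iff the region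
`(⋂ i ∈ σ, U i) ∩ X \ ⋃ j ∉ σ, U j` is nonempty.  (The intersection with `X`
implements the convention that the empty intersection equals `X`.) -/
def coverCode {α : Type*} (n : ℕ) (U : Fin n → Set α) (X : Set α) :
    Set (Finset (Fin n)) :=
  {σ | (((⋂ i ∈ σ, U i) ∩ X) \ ⋃ j ∈ σᶜ, U j).Nonempty}

/-- if `U 0, U 1, U 2` are convex open subsets of `ℝ^d`, not all empty,
and `X` is their union, then the code of the cover cannot contain the codewords
`{0,1}` and `{0,2}` while omitting `{0}` and `{0,1,2}`. -/
theorem stmt0 (d : ℕ) (hd : 1 ≤ d) (U : Fin 3 → Set (Fin d → ℝ))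
    (hconv : ∀ i, Convex ℝ (U i)) (hopen : ∀ i, IsOpen (U i))
    (hne : ∃ i, (U i).Nonempty) :
    ¬ (({0, 1} : Finset (Fin 3)) ∈ coverCode 3 U (⋃ i, U i) ∧
       ({0, 2} : Finset (Fin 3)) ∈ coverCode 3 U (⋃ i, U i) ∧
       ({0} : Finset (Fin 3)) ∉ coverCode 3 U (⋃ i, U i) ∧
       ({0, 1, 2} : Finset (Fin 3)) ∉ coverCode 3 U (⋃ i, U i)) := by
  rintro ⟨h01, h02, h0, h012⟩
  simp only [coverCode, Set.mem_setOf_eq, Set.Nonempty, Set.mem_diff, Set.mem_inter_iff,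
    Set.mem_iUnion, Finset.mem_compl, Finset.mem_insert, Finset.mem_singleton,
    Set.mem_iInter, not_exists] at h01 h02 h0 h012
  obtain ⟨p, ⟨hp01, hpX⟩, hp2⟩ := h01
  obtain ⟨q, ⟨hq02, hqX⟩, hq1⟩ := h02
  have hp0 : p ∈ U 0 := hp01 0 (Or.inl rfl)
  have hp1 : p ∈ U 1 := hp01 1 (Or.inr rfl)
  have hq0 : q ∈ U 0 := hq02 0 (Or.inl rfl)
  have hq2 : q ∈ U 2 := hq02 2 (Or.inr rfl)
  have hseg : segment ℝ p q ⊆ U 0 := (hconv 0).segment_subset hp0 hq0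
  have hpre : IsPreconnected (segment ℝ p q) := (convex_segment p q).isPreconnected
  have hcov : segment ℝ p q ⊆ U 1 ∪ U 2 := by
    intro x hx
    by_contra hnx
    rw [Set.mem_union, not_or] at hnx
    exact h0 x ⟨⟨fun i hi => hi ▸ hseg hx, ⟨0, hseg hx⟩⟩,
      fun j hj => by fin_cases j <;> simp_all⟩
  obtain ⟨x, hxseg, hx1, hx2⟩ := hpre (U 1) (U 2) (hopen 1) (hopen 2) hcov
    ⟨p, left_mem_segment ℝ p q, hp1⟩ ⟨q, right_mem_segment ℝ p q, hq2⟩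
  refine h012 x ⟨⟨fun i hi => ?_, ⟨0, hseg hxseg⟩⟩,
    fun j hj => by fin_cases j <;> simp_all⟩
  rcases hi with h|h|h <;> subst h
  · exact hseg hxseg
  · exact hx1
  · exact hx2
end

section
/- Let U₁, U₂, U₃ be open subsets of a topological space X with X = U₁ ∪ U₂ ∪ U₃, and suppose the cover is a good cover, i.e., for every nonempty σ ⊆ {1,2,3} with ⋂_{i∈σ} U_i ≠ ∅, the subspace ⋂_{i∈σ} U_i is contractible. Then the code C(U;X) cannot simultaneously contain the codewords {1,2} and {1,3} while omitting the codewords {1} and {1,2,3}. In other words, no code containing {1,2} and {1,3} but not {1} and {1,2,3} is the code of a good cover. -/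
/-- if `U 0, U 1, U 2` are open subsets of a topological space `X`
with `X = U 0 ∪ U 1 ∪ U 2`, forming a good cover (every nonempty intersection is
contractible as a subspace), then the code of the cover cannot contain the
codewords `{0,1}` and `{0,2}` while omitting `{0}` and `{0,1,2}`. -/
theorem stmt1 (X : Type*) [TopologicalSpace X] (U : Fin 3 → Set X)
    (hopen : ∀ i, IsOpen (U i)) (hcover : (⋃ i, U i) = Set.univ)
    (hgood : ∀ σ : Finset (Fin 3), σ.Nonempty → (⋂ i ∈ σ, U i).Nonempty →
      ContractibleSpace ↥(⋂ i ∈ σ, U i)) :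
    ¬ (({0, 1} : Finset (Fin 3)) ∈ coverCode 3 U Set.univ ∧
       ({0, 2} : Finset (Fin 3)) ∈ coverCode 3 U Set.univ ∧
       ({0} : Finset (Fin 3)) ∉ coverCode 3 U Set.univ ∧
       ({0, 1, 2} : Finset (Fin 3)) ∉ coverCode 3 U Set.univ) := by
  rintro ⟨h01, h02, h0, h012⟩
  -- extract points
  obtain ⟨x, hx⟩ := h01
  obtain ⟨y, hy⟩ := h02
  simp only [coverCode, Set.mem_setOf_eq, Set.mem_diff, Set.mem_inter_iff,
    Set.mem_iInter, Set.mem_iUnion, Finset.mem_insert, Finset.mem_singleton,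
    Set.mem_univ, Finset.mem_compl, not_exists] at hx hy
  have hx0 : x ∈ U 0 := hx.1.1 0 (by decide)
  have hx1 : x ∈ U 1 := hx.1.1 1 (by decide)
  have hy0 : y ∈ U 0 := hy.1.1 0 (by decide)
  have hy2 : y ∈ U 2 := hy.1.1 2 (by decide)
  -- U0 ⊆ U1 ∪ U2
  have hsub : U 0 ⊆ U 1 ∪ U 2 := by
    intro z hz
    by_contra hc
    apply h0
    refine ⟨z, ⟨⟨?_, trivial⟩, ?_⟩⟩
    · simp only [Set.mem_iInter, Finset.mem_singleton]
      rintro i rfl; exact hz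
    · simp only [Set.mem_iUnion, Finset.mem_compl, Finset.mem_singleton, not_exists]
      intro j hj hjz
      fin_cases j
      · exact hj rfl
      · exact hc (Or.inl hjz)
      · exact hc (Or.inr hjz)
  -- triple intersection empty
  have htriple : ∀ z, z ∈ U 0 → z ∈ U 1 → z ∈ U 2 → False := by
    intro z hz0 hz1 hz2
    apply h012
    refine ⟨z, ⟨⟨?_, trivial⟩, ?_⟩⟩
    · simp only [Set.mem_iInter]
      intro i _; fin_cases i <;> assumption
    · simp only [Set.mem_iUnion, not_exists]
      intro j hj
      exfalso
      simp only [Finset.mem_compl, Finset.mem_insert, Finset.mem_singleton] at hj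
      push_neg at hj
      fin_cases j <;> simp_all
  -- U 0 is connected
  have hU0eq : (⋂ i ∈ ({0} : Finset (Fin 3)), U i) = U 0 := by simp
  have hcontr : ContractibleSpace ↥(U 0) := by
    rw [← hU0eq]
    exact hgood {0} ⟨0, Finset.mem_singleton_self 0⟩ (hU0eq ▸ ⟨x, hx0⟩)
  have hconn : IsPreconnected (U 0) := by
    have : ConnectedSpace ↥(U 0) := by infer_instance
    exact (isConnected_iff_connectedSpace.mpr this).isPreconnected
  obtain ⟨z, hz⟩ := hconn (U 1) (U 2) (hopen 1) (hopen 2) hsub ⟨x, hx0, hx1⟩ ⟨y, hy0, hy2⟩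
  exact htriple z hz.1 hz.2.1 hz.2.2
end

section
/- Let U₁, U₂, U₃ be open subsets of a topological space X with X = U₁ ∪ U₂ ∪ U₃, and suppose the code C(U;X) contains {1,2} and {1,3} but contains neither {1} nor {1,2,3}. Then U₁ = (U₁ ∩ U₂) ∪ (U₁ ∩ U₃), where U₁ ∩ U₂ and U₁ ∩ U₃ are nonempty and disjoint; consequently U₁ is not a connected subspace. -/
/-- if `U 0, U 1, U 2` are open subsets of a topological space `X`
with `X = U 0 ∪ U 1 ∪ U 2`, and the code of the cover contains `{0,1}` and `{0,2}`
but neither `{0}` nor `{0,1,2}`, then `U 0 = (U 0 ∩ U 1) ∪ (U 0 ∩ U 2)` with the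
two pieces nonempty and disjoint; consequently `U 0` is not connected. -/
theorem stmt2 (X : Type*) [TopologicalSpace X] (U : Fin 3 → Set X)
    (hopen : ∀ i, IsOpen (U i)) (hcover : (⋃ i, U i) = Set.univ)
    (h01 : ({0, 1} : Finset (Fin 3)) ∈ coverCode 3 U Set.univ)
    (h02 : ({0, 2} : Finset (Fin 3)) ∈ coverCode 3 U Set.univ)
    (h0 : ({0} : Finset (Fin 3)) ∉ coverCode 3 U Set.univ)
    (h012 : ({0, 1, 2} : Finset (Fin 3)) ∉ coverCode 3 U Set.univ) :
    U 0 = (U 0 ∩ U 1) ∪ (U 0 ∩ U 2) ∧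
    (U 0 ∩ U 1).Nonempty ∧ (U 0 ∩ U 2).Nonempty ∧
    Disjoint (U 0 ∩ U 1) (U 0 ∩ U 2) ∧
    ¬ IsConnected (U 0) := by
  simp only [coverCode, Set.mem_setOf_eq, Set.Nonempty, Set.mem_diff, Set.mem_inter_iff,
    Set.mem_iInter, Set.mem_iUnion, Finset.mem_compl, Set.mem_univ, and_true,
    not_exists] at h01 h02 h0 h012
  simp only [Finset.mem_insert, Finset.mem_singleton] at h01 h02 h0 h012
  push_neg at h0 h012
  -- extract a point a ∈ U0 ∩ U1, a ∉ U2
  obtain ⟨a, ha, ha'⟩ := h01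
  have ha0 : a ∈ U 0 := ha 0 (Or.inl rfl)
  have ha1 : a ∈ U 1 := ha 1 (Or.inr rfl)
  have ha2 : a ∉ U 2 := ha' 2 (by decide)
  obtain ⟨b, hb, hb'⟩ := h02
  have hb0 : b ∈ U 0 := hb 0 (Or.inl rfl)
  have hb2 : b ∈ U 2 := hb 2 (Or.inr rfl)
  have hb1 : b ∉ U 1 := hb' 1 (by decide)
  -- any point of U0 lies in U1 or U2
  have hsplit : ∀ x ∈ U 0, x ∈ U 1 ∨ x ∈ U 2 := by
    intro x hx
    obtain ⟨j, hj, hxj⟩ := h0 x (by intro i hi; subst hi; exact hx)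
    fin_cases j
    · exact absurd rfl hj
    · exact Or.inl hxj
    · exact Or.inr hxj
  -- no point in all three
  have htriple : ∀ x, ¬(x ∈ U 0 ∧ x ∈ U 1 ∧ x ∈ U 2) := by
    rintro x ⟨hx0, hx1, hx2⟩
    obtain ⟨j, ⟨j0, j1, j2⟩, -⟩ := h012 x (by
      rintro i (rfl | rfl | rfl)
      exacts [hx0, hx1, hx2])
    fin_cases j
    · exact j0 rfl
    · exact j1 rfl
    · exact j2 rfl
  have heq : U 0 = (U 0 ∩ U 1) ∪ (U 0 ∩ U 2) := by
    ext x
    constructor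
    · intro hx
      rcases hsplit x hx with h | h
      · exact Or.inl ⟨hx, h⟩
      · exact Or.inr ⟨hx, h⟩
    · rintro (⟨hx, -⟩ | ⟨hx, -⟩) <;> exact hx
  have hdisj : Disjoint (U 0 ∩ U 1) (U 0 ∩ U 2) := by
    rw [Set.disjoint_left]
    rintro x ⟨hx0, hx1⟩ ⟨-, hx2⟩
    exact htriple x ⟨hx0, hx1, hx2⟩
  refine ⟨heq, ⟨a, ha0, ha1⟩, ⟨b, hb0, hb2⟩, hdisj, ?_⟩
  rintro ⟨-, hpre⟩
  obtain ⟨x, hx0, hx1, hx2⟩ := hpre (U 1) (U 2) (hopen 1) (hopen 2)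
    (fun x hx => hsplit x hx) ⟨a, ha0, ha1⟩ ⟨b, hb0, hb2⟩
  exact htriple x ⟨hx0, hx1, hx2⟩
end

section
/- Every binary code consisting of nonempty codewords can be realized as the code of an open cover in ℝ: for every n ≥ 1 and every nonempty collection C ⊆ 2^{[n]} all of whose elements are nonempty subsets of [n], there exist open subsets U₁,...,Uₙ of ℝ such that, setting X = ⋃_{i=1}^n U_i, the code of the cover satisfies C(U;X) = C. -/
/-- every nonempty binary code on `n ≥ 1` neurons all of whose
codewords are nonempty can be realized as the code of an open cover in `ℝ`. -/
theorem stmt3 (n : ℕ) (hn : 1 ≤ n) (C : Set (Finset (Fin n)))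
    (hCne : C.Nonempty) (hwords : ∀ σ ∈ C, σ.Nonempty) :
    ∃ U : Fin n → Set ℝ, (∀ i, IsOpen (U i)) ∧
      coverCode n U (⋃ i, U i) = C := by
  classical
  set I : Finset (Fin n) → Set ℝ :=
    fun σ => Set.Ioo (Encodable.encode σ : ℝ) (Encodable.encode σ + 1) with hIdef
  -- distinct codewords have disjoint intervals
  have hdisj : ∀ (x : ℝ) (σ τ : Finset (Fin n)), x ∈ I σ → x ∈ I τ → σ = τ := by
    intro x σ τ hσ hτ
    simp only [hIdef, Set.mem_Ioo] at hσ hτ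
    apply Encodable.encode_injective
    have h1 : (Encodable.encode σ : ℝ) < Encodable.encode τ + 1 := lt_trans hσ.1 hτ.2
    have h2 : (Encodable.encode τ : ℝ) < Encodable.encode σ + 1 := lt_trans hτ.1 hσ.2
    have h1' : Encodable.encode σ < Encodable.encode τ + 1 := by exact_mod_cast h1
    have h2' : Encodable.encode τ < Encodable.encode σ + 1 := by exact_mod_cast h2
    omega
  set U : Fin n → Set ℝ := fun i => ⋃ σ ∈ {σ | σ ∈ C ∧ i ∈ σ}, I σ with hUdef
  have hmem : ∀ (x : ℝ) (j : Fin n), x ∈ U j ↔ ∃ σ, σ ∈ C ∧ j ∈ σ ∧ x ∈ I σ := by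
    intro x j
    simp [hUdef, Set.mem_iUnion, and_assoc]
  refine ⟨U, ?_, ?_⟩
  · intro i
    exact isOpen_biUnion fun σ _ => isOpen_Ioo
  · ext σ
    constructor
    · rintro ⟨x, ⟨hx1, hx2⟩, hx3⟩
      -- x ∈ X, so x ∈ some U i₀, so x ∈ I τ for some τ ∈ C
      rw [Set.mem_iUnion] at hx2
      obtain ⟨i₀, hi₀⟩ := hx2
      obtain ⟨τ, hτC, hiτ, hxτ⟩ := (hmem x i₀).mp hi₀
      have key : ∀ j : Fin n, x ∈ U j ↔ j ∈ τ := by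
        intro j
        rw [hmem]
        constructor
        · rintro ⟨ρ, hρC, hjρ, hxρ⟩
          rwa [hdisj x ρ τ hxρ hxτ] at hjρ
        · intro hj; exact ⟨τ, hτC, hj, hxτ⟩
      have : σ = τ := by
        ext j
        constructor
        · intro hj
          exact (key j).mp (by have := Set.mem_iInter₂.mp hx1 j hj; simpa using this)
        · intro hj
          by_contra hns
          refine hx3 (Set.mem_iUnion₂.mpr ⟨j, ?_, (key j).mpr hj⟩)
          simpa using hns
      rwa [this]
    · intro hσ
      refine ⟨(Encodable.encode σ : ℝ) + 1/2, ⟨?_, ?_⟩, ?_⟩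
      · have hxI : ((Encodable.encode σ : ℝ) + 1/2) ∈ I σ := by
          simp only [hIdef, Set.mem_Ioo]
          constructor <;> linarith
        apply Set.mem_biInter
        intro i hi
        exact (hmem _ i).mpr ⟨σ, hσ, hi, hxI⟩
      · obtain ⟨i, hi⟩ := hwords σ hσ
        rw [Set.mem_iUnion]
        refine ⟨i, (hmem _ i).mpr ⟨σ, hσ, hi, ?_⟩⟩
        simp only [hIdef, Set.mem_Ioo]
        constructor <;> linarith
      · intro hx
        rw [Set.mem_iUnion₂] at hx
        obtain ⟨j, hj, hxj⟩ := hx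
        obtain ⟨ρ, hρC, hjρ, hxρ⟩ := (hmem _ j).mp hxj
        have hxI : ((Encodable.encode σ : ℝ) + 1/2) ∈ I σ := by
          simp only [hIdef, Set.mem_Ioo]
          constructor <;> linarith
        have := hdisj _ ρ σ hxρ hxI
        subst this
        simp at hj
        exact hj hjρ
end

section
/- Set containments among intersections of cover sets can be read off from the code of the cover: for open subsets U₁,...,Uₙ of a topological space X and any nonempty σ ⊆ [n] and any τ ⊆ [n], one has ⋂_{i∈σ} U_i ⊆ ⋃_{j∈τ} U_j if and only if every codeword ρ ∈ C(U;X) with σ ⊆ ρ satisfies ρ ∩ τ ≠ ∅. -/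
/-- set containments can be read off from the code of a cover:
for open subsets `U 1, ..., U n` of a topological space `X`, nonempty `σ ⊆ [n]`
and any `τ ⊆ [n]`, we have `⋂_{i ∈ σ} U i ⊆ ⋃_{j ∈ τ} U j` iff every codeword
`ρ` of the cover containing `σ` meets `τ`. -/
theorem stmt5 (X : Type*) [TopologicalSpace X] (n : ℕ) (U : Fin n → Set X)
    (hopen : ∀ i, IsOpen (U i)) (σ τ : Finset (Fin n)) (hσ : σ.Nonempty) :
    (⋂ i ∈ σ, U i) ⊆ (⋃ j ∈ τ, U j) ↔
      ∀ ρ ∈ coverCode n U Set.univ, σ ⊆ ρ → (ρ ∩ τ).Nonempty := by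
  constructor
  · rintro h ρ ⟨x, ⟨hxin, -⟩, hxout⟩ hσρ
    have hxσ : x ∈ ⋂ i ∈ σ, U i := by
      simp only [Set.mem_iInter] at hxin ⊢
      exact fun i hi => hxin i (hσρ hi)
    obtain ⟨j, hjτ, hxj⟩ := Set.mem_iUnion₂.mp (h hxσ)
    refine ⟨j, Finset.mem_inter.mpr ⟨?_, hjτ⟩⟩
    by_contra hj
    exact hxout (Set.mem_iUnion₂.mpr ⟨j, Finset.mem_compl.mpr hj, hxj⟩)
  · intro h x hx
    classical
    set ρ : Finset (Fin n) := Finset.univ.filter (fun j => x ∈ U j) with hρ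
    have hσρ : σ ⊆ ρ := by
      intro i hi
      simp only [hρ, Finset.mem_filter, Finset.mem_univ, true_and]
      exact Set.mem_iInter₂.mp hx i hi
    have hρcode : ρ ∈ coverCode n U Set.univ := by
      refine ⟨x, ⟨Set.mem_iInter₂.mpr fun i hi => ?_, Set.mem_univ x⟩, ?_⟩
      · have := Finset.mem_filter.mp (hρ ▸ hi)
        exact this.2
      · intro hcon
        obtain ⟨j, hj, hxj⟩ := Set.mem_iUnion₂.mp hcon
        exact (Finset.mem_compl.mp hj)
          (hρ ▸ Finset.mem_filter.mpr ⟨Finset.mem_univ j, hxj⟩)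
    obtain ⟨j, hj⟩ := h ρ hρcode hσρ
    obtain ⟨hjρ, hjτ⟩ := Finset.mem_inter.mp hj
    have hxj : x ∈ U j := by
      have := hρ ▸ hjρ
      simpa using this
    exact Set.mem_iUnion₂.mpr ⟨j, hjτ, hxj⟩
end

section
/- The code C = {{2,3,4,5}, {1,2,3}, {1,3,4}, {1,4,5}, {1,3}, {1,4}, {2,3}, {3,4}, {4,5}, {3}, {4}} on 5 neurons is not a convex code: for every d ≥ 1 and every choice of convex open subsets U₁,...,U₅ of ℝ^d with X = U₁ ∪ ⋯ ∪ U₅, the code of the cover C(U;X) is not equal to C. -/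
open Set AffineMap Topology

section Pasch

variable {𝕜 V : Type*} [Field 𝕜] [LinearOrder 𝕜] [IsStrictOrderedRing 𝕜]
  [AddCommGroup V] [Module 𝕜 V]

theorem wbtw_or_wbtw_of_wbtw_of_wbtw {p x y q : V} (hx : Wbtw 𝕜 p x q) (hy : Wbtw 𝕜 p y q) :
    Wbtw 𝕜 p x y ∨ Wbtw 𝕜 y x q := by
  obtain ⟨t, ht, rfl⟩ := hx
  obtain ⟨τ, hτ, rfl⟩ := hy
  simp only [lineMap_apply] at *
  rcases wbtw_or_wbtw_smul_vadd_of_nonneg p (q -ᵥ p) ht.1 hτ.1 with h | h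
  · exact .inl h
  · exact .inr (Wbtw.trans_left_right ⟨t, ht, by simp [lineMap_apply]⟩ h)

theorem exists_wbtw_wbtw_of_wbtw_of_wbtw {p x y z r : V} (hx : Wbtw 𝕜 p x y)
    (hz : Wbtw 𝕜 y z r) : ∃ w, Wbtw 𝕜 p w z ∧ Wbtw 𝕜 x w r := by
  obtain ⟨t, ⟨ht₀, ht₁⟩, rfl⟩ := hx
  obtain ⟨μ, ⟨hμ₀, hμ₁⟩, rfl⟩ := hz
  rcases ht₀.eq_or_lt with rfl | ht₀
  · exact ⟨p, wbtw_self_left .., by simp⟩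
  have hd : t ≤ 1 - μ + μ * t := by nlinarith
  have hd₀ : 0 < 1 - μ + μ * t := ht₀.trans_le hd
  obtain ⟨s, hs, hst⟩ : ∃ s, s = t / (1 - μ + μ * t) ∧ s * (1 - μ + μ * t) = t :=
    ⟨_, rfl, div_mul_cancel₀ _ hd₀.ne'⟩
  have hs₁ : s ≤ 1 := hs ▸ div_le_one_of_le₀ hd hd₀.le
  have hs₀ : 0 ≤ s := hs ▸ by positivity
  refine ⟨lineMap p (lineMap y r μ) s, ⟨s, ⟨hs₀, hs₁⟩, rfl⟩,
    s * μ, ⟨by positivity, mul_le_one₀ hs₁ hμ₀ hμ₁⟩, ?_⟩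
  simp only [lineMap_apply_module]
  match_scalars
  · linear_combination hst
  · linear_combination -hst
  · ring

end Pasch

section Separation

variable {V : Type*} [AddCommGroup V] [Module ℝ V] [TopologicalSpace V]
  [IsTopologicalAddGroup V] [ContinuousSMul ℝ V]

theorem exists_lineMap_mem_closure_inter {G H : Set V} (hG : Convex ℝ G) (hH : IsOpen H)
    {o z : V} (ho : o ∈ G) (hz : z ∈ closure G) (hozH : (segment ℝ o z ∩ H).Nonempty) :
    ∃ s ∈ Ico (0 : ℝ) 1, lineMap o z s ∈ closure (G ∩ H) := by
  obtain ⟨s, hs, hsH⟩ : ∃ s ∈ Ico (0 : ℝ) 1, lineMap o z s ∈ H := by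
    obtain ⟨_, hw, hwH⟩ := hozH
    rw [segment_eq_image_lineMap] at hw
    obtain ⟨s, hs, rfl⟩ := hw
    rcases hs.2.lt_or_eq with hs₁ | rfl
    · exact ⟨s, ⟨hs.1, hs₁⟩, hwH⟩
    have hnhds : ∀ᶠ s in 𝓝[<] (1 : ℝ), lineMap o z s ∈ H :=
      nhdsWithin_le_nhds ((hH.preimage lineMap_continuous).mem_nhds hwH)
    obtain ⟨s, hsH, hs⟩ := (hnhds.and (Ioo_mem_nhdsLT one_pos)).exists
    exact ⟨s, Ioo_subset_Ico_self hs, hsH⟩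
  refine ⟨s, hs, inter_comm H G ▸ hH.inter_closure ⟨hsH, ?_⟩⟩
  exact hG.closure.lineMap_mem (subset_closure ho) hz ⟨hs.1, hs.2.le⟩

theorem inter_eq_empty_of_cover_pattern {A B C D F : Set V}
    (hAc : Convex ℝ A) (hAo : IsOpen A) (hB : Convex ℝ B) (hCc : Convex ℝ C) (hCo : IsOpen C)
    (hDc : Convex ℝ D) (hDo : IsOpen D) (hF : Convex ℝ F)
    (hACD : A ⊆ C ∪ D) (hBD : B ∩ D = C ∩ F) (hAE : Disjoint A (B ∩ D))
    {p q : V} (hp : p ∈ A ∩ B ∩ C) (hq : q ∈ A ∩ D ∩ F) : B ∩ D = ∅ := by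
  refine eq_empty_iff_forall_notMem.2 fun r hr => ?_
  obtain ⟨f, c, hfA, hfE⟩ := geometric_hahn_banach_open hAc hAo (hB.inter hDc) hAE
  have hpT : p ∈ convexHull ℝ {r, p, q} := subset_convexHull ℝ _ (by simp)
  have hqT : q ∈ convexHull ℝ {r, p, q} := subset_convexHull ℝ _ (by simp)
  have hK : IsCompact (closure (B ∩ D) ∩ convexHull ℝ {r, p, q}) :=
    ((toFinite _).isCompact_convexHull ℝ).inter_left isClosed_closure
  obtain ⟨z, ⟨hzE, hzT⟩, hmin⟩ := hK.exists_isMinOn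
    ⟨r, subset_closure hr, subset_convexHull ℝ _ (mem_insert _ _)⟩ f.continuous.continuousOn
  have hcz : c ≤ f z := closure_minimal hfE (isClosed_le continuous_const f.continuous) hzE
  have descent : ∀ {G H : Set V} {o : V}, Convex ℝ G → IsOpen H → G ∩ H = B ∩ D →
      o ∈ A ∩ G → o ∈ convexHull ℝ {r, p, q} → (segment ℝ o z ∩ H).Nonempty → False := by
    intro G H o hG hH hGH ho hoT hozH
    have hzG : z ∈ closure G := closure_mono (hGH ▸ inter_subset_left) hzE
    obtain ⟨s, hs, hsE⟩ := exists_lineMap_mem_closure_inter hG hH ho.2 hzG hozH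
    have hle := hmin ⟨hGH ▸ hsE, (convex_convexHull ℝ _).lineMap_mem hoT hzT ⟨hs.1, hs.2.le⟩⟩
    have hlt : f (lineMap o z s) < f z := by
      rw [show f (lineMap o z s) = lineMap (f o) (f z) s by simp [lineMap_apply_module]]
      exact (lineMap_lt_right_iff_lt hs.2).2 ((hfA o ho.1).trans_le hcz)
    exact hlt.not_ge hle
  obtain ⟨y, hy, hzy⟩ : ∃ y, Wbtw ℝ p y q ∧ Wbtw ℝ y z r := by
    rw [convexHull_insert (insert_nonempty _ _), convexHull_pair, convexJoin_singleton_left,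
      mem_iUnion₂] at hzT
    obtain ⟨y, hy, hzy⟩ := hzT
    exact ⟨y, mem_segment_iff_wbtw.1 hy, (mem_segment_iff_wbtw.1 hzy).symm⟩
  obtain ⟨x, hx, hxC, hxD⟩ := (convex_segment p q).isPreconnected C D hCo hDo
    ((hAc.segment_subset hp.1.1 hq.1.1).trans hACD) ⟨p, left_mem_segment .., hp.2⟩
    ⟨q, right_mem_segment .., hq.1.2⟩
  rcases wbtw_or_wbtw_of_wbtw_of_wbtw (mem_segment_iff_wbtw.1 hx) hy with hxy | hxy
  · obtain ⟨w, hwp, hwx⟩ := exists_wbtw_wbtw_of_wbtw_of_wbtw hxy hzy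
    exact descent hB hDo rfl ⟨hp.1.1, hp.1.2⟩ hpT
      ⟨w, hwp.mem_segment, hDc.segment_subset hxD hr.2 hwx.mem_segment⟩
  · obtain ⟨w, hwq, hwx⟩ := exists_wbtw_wbtw_of_wbtw_of_wbtw hxy.symm hzy
    exact descent hF hCo (by rw [inter_comm, hBD]) ⟨hq.1.1, hq.2⟩ hqT
      ⟨w, hwq.mem_segment, hCc.segment_subset hxC (hBD ▸ hr).1 hwx.mem_segment⟩

end Separation

section CoverCode

variable {α : Type*} {n : ℕ} {X : Set α}

theorem mem_coverCode_iff {U : Fin n → Set α} {σ : Finset (Fin n)} :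
    σ ∈ coverCode n U X ↔ ∃ z ∈ X, ∀ i, z ∈ U i ↔ i ∈ σ := by
  simp only [coverCode, mem_ofPred_eq, Set.Nonempty, mem_sdiff, mem_inter_iff, mem_iInter,
    mem_iUnion, Finset.mem_compl, not_exists]
  refine exists_congr fun z => ⟨fun ⟨⟨h₁, hX⟩, h₂⟩ => ⟨hX, fun i => ⟨fun hi => ?_, h₁ i⟩⟩,
    fun ⟨hX, h⟩ => ⟨⟨fun i => (h i).2, hX⟩, fun i hi => mt (h i).1 hi⟩⟩
  by_contra h
  exact h₂ i h hi

theorem exists_mem_coverCode (U : Fin n → Set α) {z : α} (hz : z ∈ X) :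
    ∃ σ ∈ coverCode n U X, ∀ i, z ∈ U i ↔ i ∈ σ := by
  classical
  exact ⟨Finset.univ.filter (z ∈ U ·), mem_coverCode_iff.2 ⟨z, hz, by simp⟩, by simp⟩

end CoverCode

/-- Neurons are indexed `0, …, 4` instead of `1, …, 5`. -/
theorem stmt6_general (d : ℕ) (U : Fin 5 → Set (Fin d → ℝ))
    (hconv : ∀ i, Convex ℝ (U i)) (hopen : ∀ i, IsOpen (U i)) :
    coverCode 5 U (⋃ i, U i) ≠
      ({ {1, 2, 3, 4}, {0, 1, 2}, {0, 2, 3}, {0, 3, 4}, {0, 2}, {0, 3},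
         {1, 2}, {2, 3}, {3, 4}, {2}, {3} } : Set (Finset (Fin 5))) := by
  intro h
  have hcode : ∀ σ ∈ coverCode 5 U (⋃ i, U i), (0 ∈ σ → 2 ∈ σ ∨ 3 ∈ σ) ∧
      (1 ∈ σ ∧ 3 ∈ σ ↔ 2 ∈ σ ∧ 4 ∈ σ) ∧ ¬(0 ∈ σ ∧ 1 ∈ σ ∧ 3 ∈ σ) := by
    rw [h]
    intro σ hσ
    simp only [mem_insert_iff, mem_singleton_iff] at hσ
    rcases hσ with rfl | rfl | rfl | rfl | rfl | rfl | rfl | rfl | rfl | rfl | rfl <;> decide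
  have hcover : ∀ z ∈ ⋃ i, U i, (z ∈ U 0 → z ∈ U 2 ∨ z ∈ U 3) ∧
      (z ∈ U 1 ∧ z ∈ U 3 ↔ z ∈ U 2 ∧ z ∈ U 4) ∧ ¬(z ∈ U 0 ∧ z ∈ U 1 ∧ z ∈ U 3) := by
    intro z hz
    obtain ⟨σ, hσ, hzσ⟩ := exists_mem_coverCode U hz
    simpa only [hzσ] using hcode σ hσ
  have hword (σ : Finset (Fin 5)) (hσ : σ ∈ coverCode 5 U (⋃ i, U i)) :
      ∃ z, ∀ i, z ∈ U i ↔ i ∈ σ :=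
    (mem_coverCode_iff.1 hσ).imp fun _ => And.right
  obtain ⟨p, hp⟩ := hword {0, 1, 2} (by simp [h])
  obtain ⟨q, hq⟩ := hword {0, 3, 4} (by simp [h])
  obtain ⟨r, hr⟩ := hword {1, 2, 3, 4} (by simp [h])
  have hA : U 0 ⊆ U 2 ∪ U 3 := fun z hz => (hcover z (mem_iUnion_of_mem 0 hz)).1 hz
  have hE : U 1 ∩ U 3 = U 2 ∩ U 4 := ext fun z =>
    ⟨fun hz => (hcover z (mem_iUnion_of_mem 1 hz.1)).2.1.1 hz,
      fun hz => (hcover z (mem_iUnion_of_mem 2 hz.1)).2.1.2 hz⟩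
  have hAE : Disjoint (U 0) (U 1 ∩ U 3) :=
    disjoint_left.2 fun z hz hzE => (hcover z (mem_iUnion_of_mem 0 hz)).2.2 ⟨hz, hzE⟩
  have hBD := inter_eq_empty_of_cover_pattern (hconv 0) (hopen 0) (hconv 1) (hconv 2) (hopen 2)
    (hconv 3) (hopen 3) (hconv 4) hA hE hAE (p := p) (q := q) (by simp [hp]) (by simp [hq])
  exact (show (U 1 ∩ U 3).Nonempty from ⟨r, by simp [hr]⟩).ne_empty hBD

/-- the code `C = {2345, 123, 134, 145, 13, 14, 23, 34, 45, 3, 4}`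
(written here with neurons indexed `0,…,4` instead of `1,…,5`) is not a convex
code: no choice of convex open subsets `U 0, …, U 4` of `ℝ^d` realizes it as the
code of the cover of `X = ⋃ i, U i`. -/
theorem stmt6 (d : ℕ) (hd : 1 ≤ d) (U : Fin 5 → Set (Fin d → ℝ))
    (hconv : ∀ i, Convex ℝ (U i)) (hopen : ∀ i, IsOpen (U i)) :
    coverCode 5 U (⋃ i, U i) ≠
      ({ {1, 2, 3, 4}, {0, 1, 2}, {0, 2, 3}, {0, 3, 4}, {0, 2}, {0, 3},
         {1, 2}, {2, 3}, {3, 4}, {2}, {3} } : Set (Finset (Fin 5))) :=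
  stmt6_general d U hconv hopen
end

section
/- Every intersection-complete code is a convex code: if C ⊆ 2^{[n]} is a nonempty code such that σ ∩ τ ∈ C for all σ, τ ∈ C, then there exist d ≥ 1, a convex open set X ⊆ ℝ^d, and convex open subsets U₁,...,Uₙ ⊆ X such that C(U;X) = C. -/
/-- A nonempty finite intersection of elements of an intersection-complete
code is again in the code. -/
lemma inter_mem_of_interComplete {n m : ℕ} {C : Set (Finset (Fin n))}
    (hint : ∀ σ ∈ C, ∀ τ ∈ C, σ ∩ τ ∈ C) (τ : Fin m → Finset (Fin n))
    (hτ : ∀ k, τ k ∈ C) :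
    ∀ (s : Finset (Fin m)), s.Nonempty →
      ∀ σ : Finset (Fin n), (∀ i, i ∈ σ ↔ ∀ k ∈ s, i ∈ τ k) → σ ∈ C := by
  intro s hs
  induction hs using Finset.Nonempty.cons_induction with
  | singleton a =>
    intro σ hσ
    have : σ = τ a := by
      ext i
      simpa using hσ i
    rw [this]; exact hτ a
  | cons a s ha hs ih =>
    intro σ hσ
    classical
    set σ' : Finset (Fin n) := Finset.univ.filter (fun i => ∀ k ∈ s, i ∈ τ k) with hσ'
    have hσ'C : σ' ∈ C := by
      apply ih
      intro i
      simp [hσ']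
    have : σ = τ a ∩ σ' := by
      ext i
      simp only [Finset.mem_inter, hσ', Finset.mem_filter, Finset.mem_univ, true_and]
      rw [hσ i]
      constructor
      · intro h
        exact ⟨h a (Finset.mem_cons_self a s), fun k hk => h k (Finset.mem_cons_of_mem hk)⟩
      · rintro ⟨h1, h2⟩ k hk
        rcases Finset.mem_cons.mp hk with rfl | hk
        · exact h1
        · exact h2 k hk
    rw [this]
    exact hint _ (hτ a) _ hσ'C

/-- every nonempty intersection-complete code is convex: there are
`d ≥ 1`, a convex open `X ⊆ ℝ^d`, and convex open subsets `U i ⊆ X` whose cover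
code (relative to `X`) equals `C`. -/
theorem stmt7 (n : ℕ) (C : Set (Finset (Fin n))) (hCne : C.Nonempty)
    (hint : ∀ σ ∈ C, ∀ τ ∈ C, σ ∩ τ ∈ C) :
    ∃ (d : ℕ), 1 ≤ d ∧ ∃ X : Set (Fin d → ℝ), Convex ℝ X ∧ IsOpen X ∧
      ∃ U : Fin n → Set (Fin d → ℝ),
        (∀ i, Convex ℝ (U i) ∧ IsOpen (U i) ∧ U i ⊆ X) ∧
        coverCode n U X = C := by
  classical
  obtain ⟨m, τ, hm1, hτmem, hτsurj⟩ :
      ∃ (m : ℕ) (τ : Fin m → Finset (Fin n)), 1 ≤ m ∧ (∀ k, τ k ∈ C) ∧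
        ∀ c ∈ C, ∃ k, τ k = c := by
    haveI : Fintype C := Fintype.ofFinite C
    refine ⟨Fintype.card C, fun k => ((Fintype.equivFin C).symm k : Finset (Fin n)),
      Fintype.card_pos_iff.mpr hCne.to_subtype,
      fun k => ((Fintype.equivFin C).symm k).2, fun c hc => ?_⟩
    exact ⟨Fintype.equivFin C ⟨c, hc⟩, by simp⟩
  -- real constants
  have hmR : (1 : ℝ) ≤ (m : ℝ) := by exact_mod_cast hm1
  have hmpos : (0 : ℝ) < (m : ℝ) := by linarith
  -- the ambient convex open set
  set X : Set (Fin m → ℝ) :=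
    {x | (∀ k, 0 < x k) ∧ (∀ k, x k < 2) ∧ (∑ k, x k) < (m : ℝ)} with hX
  -- the convex open subsets
  set U : Fin n → Set (Fin m → ℝ) :=
    fun i => X ∩ ⋂ k, {x | i ∉ τ k → 1 < x k} with hU
  -- basic facts
  have evalLin : ∀ k : Fin m, IsLinearMap ℝ (fun x : Fin m → ℝ => x k) :=
    fun k => ⟨fun a b => rfl, fun c a => rfl⟩
  have sumLin : IsLinearMap ℝ (fun x : Fin m → ℝ => ∑ k, x k) := by
    constructor
    · intro a b; simp [Finset.sum_add_distrib]
    · intro c a; simp [Finset.mul_sum]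
  have hXeq : X = (⋂ k, {x : Fin m → ℝ | 0 < x k}) ∩
      ((⋂ k, {x : Fin m → ℝ | x k < 2}) ∩ {x | (∑ k, x k) < (m : ℝ)}) := by
    ext x; simp [hX, Set.mem_iInter]
  have hXconv : Convex ℝ X := by
    rw [hXeq]
    exact (convex_iInter fun k => convex_halfSpace_gt (evalLin k) 0).inter
      ((convex_iInter fun k => convex_halfSpace_lt (evalLin k) 2).inter
        (convex_halfSpace_lt sumLin _))
  have hXopen : IsOpen X := by
    rw [hXeq]
    refine ((isOpen_iInter_of_finite fun k =>
        isOpen_lt continuous_const (continuous_apply k)).inter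
      ((isOpen_iInter_of_finite fun k =>
        isOpen_lt (continuous_apply k) continuous_const).inter
        (isOpen_lt (continuous_finset_sum _ fun k _ => continuous_apply k) continuous_const)))
  have hUconv : ∀ i, Convex ℝ (U i) := by
    intro i
    apply hXconv.inter
    apply convex_iInter
    intro k
    by_cases h : i ∈ τ k
    · simp only [h, not_true_eq_false, false_implies]
      exact convex_univ
    · simp only [h, not_false_eq_true, true_implies]
      exact convex_halfSpace_gt (evalLin k) 1
  have hUopen : ∀ i, IsOpen (U i) := by
    intro i
    apply hXopen.inter
    apply isOpen_iInter_of_finite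
    intro k
    by_cases h : i ∈ τ k
    · simp only [h, not_true_eq_false, false_implies]
      exact isOpen_univ
    · simp only [h, not_false_eq_true, true_implies]
      exact isOpen_lt continuous_const (continuous_apply k)
  have hUsub : ∀ i, U i ⊆ X := fun i => Set.inter_subset_left
  have hUmem : ∀ i x, x ∈ U i ↔ x ∈ X ∧ ∀ k, i ∉ τ k → 1 < x k := by
    intro i x
    simp [hU, Set.mem_iInter]
  -- in X some coordinate is ≤ 1
  have hsmall : ∀ x ∈ X, ∃ k, x k ≤ 1 := by
    intro x hx
    by_contra h
    push_neg at h
    have : (m : ℝ) ≤ ∑ k, x k := by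
      calc (m : ℝ) = ∑ _k : Fin m, (1 : ℝ) := by simp
        _ ≤ ∑ k, x k := Finset.sum_le_sum fun k _ => (h k).le
    exact absurd hx.2.2 (not_lt.mpr this)
  refine ⟨m, hm1, X, hXconv, hXopen, U, fun i => ⟨hUconv i, hUopen i, hUsub i⟩, ?_⟩
  ext σ
  constructor
  · rintro ⟨x, ⟨⟨hx1, hxX⟩, hx2⟩⟩
    rw [Set.mem_iInter₂] at hx1
    rw [Set.mem_iUnion₂] at hx2
    push_neg at hx2
    -- the set of small coordinates
    set K : Finset (Fin m) := Finset.univ.filter (fun k => x k ≤ 1) with hK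
    have hKne : K.Nonempty := by
      obtain ⟨k, hk⟩ := hsmall x hxX
      exact ⟨k, by simp [hK, hk]⟩
    apply inter_mem_of_interComplete hint τ hτmem K hKne σ
    intro i
    constructor
    · intro hi k hk
      have hxU := (hUmem i x).mp (hx1 i hi)
      by_contra hiτ
      have := hxU.2 k hiτ
      simp [hK] at hk
      linarith
    · intro hi
      by_contra hiσ
      have hiσc : i ∈ σᶜ := Finset.mem_compl.mpr hiσ
      apply hx2 i hiσc
      rw [hUmem]
      refine ⟨hxX, fun k hk => ?_⟩
      by_contra hle
      push_neg at hle
      exact hk (hi k (by simp [hK, hle]))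
  · intro hσ
    obtain ⟨k₀, hk₀⟩ := hτsurj σ hσ
    -- witness point
    set x : Fin m → ℝ := fun k => if k = k₀ then 1/2 else 1 + 1/(2*m) with hxdef
    have hx0 : ∀ k, 0 < x k := by
      intro k
      rw [hxdef]
      dsimp only
      split <;> positivity
    have hx2' : ∀ k, x k < 2 := by
      intro k
      rw [hxdef]
      dsimp only
      split
      · norm_num
      · have : 1/(2*(m:ℝ)) ≤ 1/2 := by
          apply div_le_div_of_nonneg_left <;> linarith
        linarith
    have hsum : ∑ k, x k = 1/2 + ((m : ℝ) - 1) * (1 + 1/(2*m)) := by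
      rw [← Finset.add_sum_erase _ _ (Finset.mem_univ k₀)]
      have h1 : x k₀ = 1/2 := by simp [hxdef]
      have h2 : ∀ k ∈ Finset.univ.erase k₀, x k = 1 + 1/(2*(m:ℝ)) := by
        intro k hk
        have : k ≠ k₀ := Finset.ne_of_mem_erase hk
        simp [hxdef, this]
      rw [h1, Finset.sum_congr rfl h2, Finset.sum_const, Finset.card_erase_of_mem
        (Finset.mem_univ k₀)]
      simp only [Finset.card_univ, Fintype.card_fin, nsmul_eq_mul]
      have : ((m - 1 : ℕ) : ℝ) = (m : ℝ) - 1 := by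
        rw [Nat.cast_sub hm1]
        simp
      rw [this]
    have hsumlt : ∑ k, x k < (m : ℝ) := by
      rw [hsum]
      have h1 : ((m:ℝ) - 1) * (1/(2*m)) < 1/2 := by
        have h2m : (0:ℝ) < 2*m := by linarith
        have heq : ((m:ℝ) - 1) * (1/(2*m)) = ((m:ℝ) - 1) / (2*m) := by ring
        rw [heq, div_lt_div_iff₀ h2m two_pos]
        linarith
      nlinarith
    have hxX : x ∈ X := ⟨hx0, hx2', hsumlt⟩
    refine ⟨x, ⟨⟨?_, hxX⟩, ?_⟩⟩
    · rw [Set.mem_iInter₂]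
      intro i hi
      rw [hUmem]
      refine ⟨hxX, fun k hk => ?_⟩
      have hkk₀ : k ≠ k₀ := by
        rintro rfl
        exact hk (hk₀ ▸ hi)
      rw [hxdef]
      simp only [hkk₀, if_false]
      have : 0 < 1/(2*(m:ℝ)) := by positivity
      linarith
    · rw [Set.mem_iUnion₂]
      push_neg
      intro j hj
      rw [hUmem]
      rintro ⟨-, h⟩
      have hjτ : j ∉ τ k₀ := by
        rw [hk₀]
        exact Finset.mem_compl.mp hj
      have := h k₀ hjτ
      rw [hxdef] at this
      simp at this
      linarith
end

section
/- Every abstract simplicial complex arises as the simplicial complex of a feedforward code: for every n ≥ 1 and every abstract simplicial complex K on the vertex set [n] (a nonempty collection of subsets of [n] closed under taking subsets, containing every singleton {i}), there exist k ≥ 1, weight vectors w₁,...,wₙ ∈ ℝ^k, and thresholds θ₁,...,θₙ ∈ ℝ such that, defining for each j the set U_j = {x ∈ ℝ^k : x_i > 0 for all i, and ⟨w_j, x⟩ > θ_j} (the intersection of the open positive orthant with an open half-space), one has for every nonempty σ ⊆ [n]: σ ∈ K if and only if ⋂_{j∈σ} U_j ≠ ∅. -/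
/-- every abstract simplicial complex on vertex set `[n]` (a nonempty
collection of subsets of `[n]` closed under taking subsets and containing all
singletons) is the simplicial complex of a feedforward code: there are `k ≥ 1`,
weights `w j ∈ ℝ^k` and thresholds `θ j ∈ ℝ` such that, with
`U j = {x : 0 < x i for all i, and ⟨w j, x⟩ > θ j}` (the intersection of the open
positive orthant with an open half-space), a nonempty `σ ⊆ [n]` belongs to `K`
iff `⋂ j ∈ σ, U j` is nonempty. -/
theorem stmt8 (n : ℕ) (hn : 1 ≤ n) (K : Set (Finset (Fin n)))
    (hKne : K.Nonempty)
    (hdown : ∀ σ ∈ K, ∀ τ : Finset (Fin n), τ ⊆ σ → τ ∈ K)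
    (hvert : ∀ i : Fin n, ({i} : Finset (Fin n)) ∈ K) :
    ∃ (k : ℕ), 1 ≤ k ∧ ∃ (w : Fin n → (Fin k → ℝ)) (θ : Fin n → ℝ),
      ∀ σ : Finset (Fin n), σ.Nonempty →
        (σ ∈ K ↔
          (⋂ j ∈ σ, {x : Fin k → ℝ | (∀ i, 0 < x i) ∧
            θ j < ∑ i, w j i * x i}).Nonempty) := by
  classical
  obtain ⟨e⟩ : Nonempty (Finset (Fin n) ≃ Fin (2 ^ n)) :=
    ⟨Fintype.equivFinOfCardEq (by simp [Fintype.card_finset])⟩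
  set A : ℝ := (n : ℝ) + 1 with hA
  have hApos : 0 < A := by positivity
  set f : Fin n → Finset (Fin n) → ℝ :=
    (fun j τ => if j ∈ τ ∧ τ ∈ K then 1 else -A) with hf
  have hf_le : ∀ j τ, f j τ ≤ 1 := by
    intro j τ; simp only [hf]; split
    · exact le_refl 1
    · linarith
  have hf_ge : ∀ j τ, -A ≤ f j τ := by
    intro j τ; simp only [hf]; split
    · linarith
    · exact le_refl _
  refine ⟨2 ^ n, Nat.one_le_two_pow, fun j i => f j (e.symm i), fun _ => 0, ?_⟩
  intro σ hσ
  set ε : ℝ := 1 / (2 * A * 2 ^ n) with hε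
  have hεpos : 0 < ε := by positivity
  constructor
  · -- σ ∈ K → intersection nonempty
    intro hσK
    refine ⟨fun i => if i = e σ then 1 else ε, ?_⟩
    simp only [Set.mem_iInter, Set.mem_setOf_eq]
    intro j hj
    constructor
    · intro i; split
      · exact one_pos
      · exact hεpos
    · have key : ∀ i : Fin (2 ^ n), i ≠ e σ →
          -(A * ε) ≤ f j (e.symm i) * (if i = e σ then (1:ℝ) else ε) := by
        intro i hi
        rw [if_neg hi]
        have := hf_ge j (e.symm i)
        nlinarith [hεpos]
      have hsplit := Finset.add_sum_erase Finset.univ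
        (fun i => f j (e.symm i) * (if i = e σ then (1:ℝ) else ε))
        (Finset.mem_univ (e σ))
      simp only at hsplit
      have hbound : ∑ i ∈ Finset.univ.erase (e σ),
          f j (e.symm i) * (if i = e σ then (1:ℝ) else ε) ≥
          (Finset.univ.erase (e σ)).card • (-(A * ε)) := by
        refine Finset.card_nsmul_le_sum _ _ _ ?_
        intro i hi
        exact key i (Finset.ne_of_mem_erase hi)
      have hcard : ((Finset.univ.erase (e σ)).card : ℝ) ≤ 2 ^ n := by
        have := Finset.card_le_univ (Finset.univ.erase (e σ) : Finset (Fin (2 ^ n)))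
        simp only [Fintype.card_fin] at this
        exact_mod_cast this
      have hfjσ : f j σ = 1 := by
        simp only [hf]; exact if_pos ⟨hj, hσK⟩
      have hAε : A * ε * 2 ^ n = 1 / 2 := by
        rw [hε]; field_simp
      have h2 : ((Finset.univ.erase (e σ)).card : ℝ) * (-(A * ε)) ≥ -(1/2) := by
        have hAεpos : 0 < A * ε := by positivity
        nlinarith [mul_le_mul_of_nonneg_right hcard hAεpos.le]
      rw [← hsplit, if_true, Equiv.symm_apply_apply, hfjσ]
      have h3 := hbound
      rw [nsmul_eq_mul] at h3
      have h4 := le_trans h2 h3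
      linarith [h4]
  · -- intersection nonempty → σ ∈ K
    rintro ⟨x, hx⟩
    by_contra hσK
    simp only [Set.mem_iInter, Set.mem_setOf_eq] at hx
    have hxpos : ∀ i, 0 < x i := (hx (σ.min' hσ) (σ.min'_mem hσ)).1
    -- each column sum is ≤ -1
    have hcol : ∀ i : Fin (2 ^ n), ∑ j ∈ σ, f j (e.symm i) ≤ -1 := by
      intro i
      set τ := e.symm i with hτ
      -- find j0 ∈ σ with f j0 τ = -A
      obtain ⟨j0, hj0σ, hj0⟩ : ∃ j0 ∈ σ, f j0 τ = -A := by
        by_cases hτK : τ ∈ K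
        · have : ¬ σ ⊆ τ := fun hsub => hσK (hdown τ hτK σ hsub)
          obtain ⟨j0, hj0σ, hj0τ⟩ := Finset.not_subset.mp this
          exact ⟨j0, hj0σ, by simp only [hf]; rw [if_neg (by tauto)]⟩
        · obtain ⟨j0, hj0σ⟩ := hσ
          exact ⟨j0, hj0σ, by simp only [hf]; rw [if_neg (by tauto)]⟩
      have hsplit := Finset.add_sum_erase σ (fun j => f j τ) hj0σ
      have hrest : ∑ j ∈ σ.erase j0, f j τ ≤ ((σ.erase j0).card : ℝ) := by
        calc ∑ j ∈ σ.erase j0, f j τ ≤ ∑ j ∈ σ.erase j0, (1:ℝ) :=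
              Finset.sum_le_sum (fun j _ => hf_le j τ)
          _ = ((σ.erase j0).card : ℝ) := by simp
      have hcard : ((σ.erase j0).card : ℝ) ≤ n := by
        have := Finset.card_le_univ (σ.erase j0)
        simp only [Fintype.card_fin] at this
        exact_mod_cast this
      rw [← hsplit, hj0]
      rw [hA]
      linarith
    have hS : (0:ℝ) < ∑ j ∈ σ, ∑ i, f j (e.symm i) * x i :=
      Finset.sum_pos (fun j hj => (hx j hj).2) hσ
    have hswap : ∑ j ∈ σ, ∑ i, f j (e.symm i) * x i
        = ∑ i, (∑ j ∈ σ, f j (e.symm i)) * x i := by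
      rw [Finset.sum_comm]
      exact Finset.sum_congr rfl (fun i _ => (Finset.sum_mul _ _ _).symm)
    have hneg : ∑ i, (∑ j ∈ σ, f j (e.symm i)) * x i ≤ ∑ i : Fin (2 ^ n), -(x i) := by
      refine Finset.sum_le_sum (fun i _ => ?_)
      have := hcol i
      nlinarith [hxpos i]
    have hsumpos : (0:ℝ) < ∑ i : Fin (2 ^ n), x i :=
      Finset.sum_pos (fun i _ => hxpos i) (Finset.univ_nonempty)
    rw [hswap] at hS
    rw [Finset.sum_neg_distrib] at hneg
    linarith
end
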